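/- Fix n ≥ 1 and let x_k := cos((2k−1)π/(2n)), k = 1, …, n, be the Chebyshev nodes in [−1,1]. Let l_k denote the Lagrange fundamental polynomials for these nodes, i.e. the unique polynomials of degree < n with l_k(x_m) = δ_{km}, let L_n f(x) := ∑_{k=1}^n f(x_k) l_k(x), and let Λ := sup_{x ∈ [−1,1]} ∑_{k=1}^n |l_k(x)| be the Lebesgue constant. Then for all continuous f, g : [−1,1] → ℝ and all x ∈ [−1,1], |L_n(f·g)(x) − L_n f(x)·L_n g(x)| ≤ (1/4)·Λ·(1+Λ)·ω(f;2)·ω(g;2), where ω(f;2) := sup{|f(s) − f(t)| : s, t ∈ [−1,1]}. -/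

import Mathlib

/-!
The fundamental polynomials sum to one, so `L_n` reproduces constants and, for any constants
`c` and `d`, `L_n(fg) - L_n f · L_n g = L_n((f-c)(g-d)) - L_n(f-c) · L_n(g-d)`. Taking for `c`
and `d` the midpoints of the ranges of `f` and `g` on the nodes, the node values of `f - c` and
`g - d` are at most `ω(f;2)/2` and `ω(g;2)/2` in absolute value, and `|L_n h(x)| ≤ Λ max_k |h(x_k)|`
bounds the two terms by `Λ ω(f;2) ω(g;2)/4` and `Λ² ω(f;2) ω(g;2)/4`. Nothing about the nodes
beyond `∑ l_k(x) = 1` and `∑ |l_k(x)| ≤ Λ` enters, so the estimate is a Grüss inequality for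
finite sums with signed weights.
-/

/-- The `k`-th Chebyshev node for `n` nodes: `cos((2k-1)π/(2n))`. -/
noncomputable def chebNode (n k : ℕ) : ℝ :=
  Real.cos ((2 * k - 1) * Real.pi / (2 * n))

/-- Lagrange fundamental polynomial at the Chebyshev nodes (nodes indexed `1, …, n`). -/
noncomputable def lagBasis (n k : ℕ) (t : ℝ) : ℝ :=
  ∏ m ∈ (Finset.Icc 1 n).erase k, (t - chebNode n m) / (chebNode n k - chebNode n m)

/-- The Lagrange interpolation operator at the Chebyshev nodes. -/
noncomputable def lagOp (n : ℕ) (f : ℝ → ℝ) (t : ℝ) : ℝ :=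
  ∑ k ∈ Finset.Icc 1 n, f (chebNode n k) * lagBasis n k t

/-- The Lebesgue constant `‖L_n‖ = sup_{x ∈ [-1,1]} ∑ |l_k(x)|`. -/
noncomputable def lebesgueConst (n : ℕ) : ℝ :=
  sSup {s : ℝ | ∃ t ∈ Set.Icc (-1:ℝ) 1, s = ∑ k ∈ Finset.Icc 1 n, |lagBasis n k t|}

open Finset

section WeightedSum

variable {ι : Type*} {s : Finset ι} {w : ι → ℝ}

theorem abs_sum_mul_le_mul_sum_abs {a : ι → ℝ} {M : ℝ} (ha : ∀ k ∈ s, |a k| ≤ M) :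
    |∑ k ∈ s, a k * w k| ≤ M * ∑ k ∈ s, |w k| := by
  rw [mul_sum]
  refine (abs_sum_le_sum_abs _ _).trans (sum_le_sum fun k hk => ?_)
  rw [abs_mul]
  exact mul_le_mul_of_nonneg_right (ha k hk) (abs_nonneg _)

theorem exists_forall_abs_sub_le_half {a : ι → ℝ} {α : ℝ} (hs : s.Nonempty)
    (ha : ∀ i ∈ s, ∀ j ∈ s, a i - a j ≤ α) : ∃ c, ∀ k ∈ s, |a k - c| ≤ α / 2 := by
  obtain ⟨i, hi, hmax⟩ := s.exists_max_image a hs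
  obtain ⟨j, hj, hmin⟩ := s.exists_min_image a hs
  refine ⟨(a i + a j) / 2, fun k hk => abs_le.2 ⟨?_, ?_⟩⟩ <;>
    linarith [hmax k hk, hmin k hk, ha i hi j hj]

theorem sum_mul_mul_sub_sum_mul_sum_eq (hw : ∑ k ∈ s, w k = 1) (a b : ι → ℝ) (c d : ℝ) :
    ∑ k ∈ s, a k * b k * w k - (∑ k ∈ s, a k * w k) * ∑ k ∈ s, b k * w k =
      ∑ k ∈ s, (a k - c) * (b k - d) * w k -
        (∑ k ∈ s, (a k - c) * w k) * ∑ k ∈ s, (b k - d) * w k := by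
  have expand : ∀ (e : ι → ℝ) (c : ℝ), ∑ k ∈ s, (e k - c) * w k = ∑ k ∈ s, e k * w k - c := by
    intro e c
    simp only [sub_mul, sum_sub_distrib, ← mul_sum, hw, mul_one]
  have hprod : ∑ k ∈ s, (a k - c) * (b k - d) * w k =
      ∑ k ∈ s, a k * b k * w k - c * ∑ k ∈ s, b k * w k - d * ∑ k ∈ s, a k * w k + c * d := by
    rw [← sum_congr rfl fun k _ => (by ring : a k * b k * w k - c * (b k * w k) - d * (a k * w k)
      + c * d * w k = (a k - c) * (b k - d) * w k)]
    simp only [sum_add_distrib, sum_sub_distrib, ← mul_sum, hw, mul_one]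
  rw [hprod, expand, expand]
  ring

theorem abs_sum_mul_mul_sub_sum_mul_sum_le {a b : ι → ℝ} {Λ α β : ℝ}
    (hw : ∑ k ∈ s, w k = 1) (hΛ : ∑ k ∈ s, |w k| ≤ Λ)
    (ha : ∀ i ∈ s, ∀ j ∈ s, a i - a j ≤ α) (hb : ∀ i ∈ s, ∀ j ∈ s, b i - b j ≤ β) :
    |∑ k ∈ s, a k * b k * w k - (∑ k ∈ s, a k * w k) * ∑ k ∈ s, b k * w k| ≤
      1 / 4 * Λ * (1 + Λ) * α * β := by
  obtain ⟨i, hi⟩ : s.Nonempty := nonempty_of_sum_ne_zero (hw.trans_ne one_ne_zero)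
  have hα : 0 ≤ α := by simpa using ha i hi i hi
  have hβ : 0 ≤ β := by simpa using hb i hi i hi
  have hΛ0 : 0 ≤ Λ := (sum_nonneg fun k _ => abs_nonneg (w k)).trans hΛ
  obtain ⟨c, hc⟩ := exists_forall_abs_sub_le_half ⟨i, hi⟩ ha
  obtain ⟨d, hd⟩ := exists_forall_abs_sub_le_half ⟨i, hi⟩ hb
  have hprod : |∑ k ∈ s, (a k - c) * (b k - d) * w k| ≤ α / 2 * (β / 2) * Λ := by
    refine (abs_sum_mul_le_mul_sum_abs fun k hk => ?_).trans (by gcongr)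
    rw [abs_mul]
    exact mul_le_mul (hc k hk) (hd k hk) (abs_nonneg _) (by positivity)
  have hf : |∑ k ∈ s, (a k - c) * w k| ≤ α / 2 * Λ :=
    (abs_sum_mul_le_mul_sum_abs hc).trans (by gcongr)
  have hg : |∑ k ∈ s, (b k - d) * w k| ≤ β / 2 * Λ :=
    (abs_sum_mul_le_mul_sum_abs hd).trans (by gcongr)
  rw [sum_mul_mul_sub_sum_mul_sum_eq hw a b c d]
  calc _ ≤ |∑ k ∈ s, (a k - c) * (b k - d) * w k| +
        |∑ k ∈ s, (a k - c) * w k| * |∑ k ∈ s, (b k - d) * w k| := by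
          rw [← abs_mul]; exact abs_sub _ _
    _ ≤ α / 2 * (β / 2) * Λ + α / 2 * Λ * (β / 2 * Λ) := by
          gcongr
    _ = 1 / 4 * Λ * (1 + Λ) * α * β := by ring

end WeightedSum

theorem sub_le_sSup_oscillation {K : Set ℝ} {f : ℝ → ℝ} (hK : IsCompact K)
    (hf : ContinuousOn f K) {s t : ℝ} (hs : s ∈ K) (ht : t ∈ K) :
    f s - f t ≤ sSup {d : ℝ | ∃ s ∈ K, ∃ t ∈ K, d = |f s - f t|} := by
  obtain ⟨C, hC⟩ := hK.exists_bound_of_continuousOn hf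
  simp only [Real.norm_eq_abs] at hC
  refine (le_abs_self _).trans (le_csSup ⟨2 * C, ?_⟩ ⟨s, hs, t, ht, rfl⟩)
  rintro _ ⟨s, hs, t, ht, rfl⟩
  linarith [abs_sub (f s) (f t), hC s hs, hC t ht]

theorem chebNode_injOn (n : ℕ) : Set.InjOn (chebNode n) (Icc 1 n : Set ℕ) := by
  intro k hk m hm h
  simp only [coe_Icc, Set.mem_Icc] at hk hm
  have angle_mem : ∀ j : ℕ, 1 ≤ j → j ≤ n →
      ((2 * j - 1) * Real.pi / (2 * n) : ℝ) ∈ Set.Icc 0 Real.pi := by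
    intro j hj1 hjn
    have hj1' : (1 : ℝ) ≤ j := by exact_mod_cast hj1
    have hjn' : (j : ℝ) ≤ n := by exact_mod_cast hjn
    have hπ := Real.pi_pos
    constructor
    · exact div_nonneg (mul_nonneg (by linarith) hπ.le) (by positivity)
    · rw [div_le_iff₀ (by linarith)]
      nlinarith
  have hangle := Real.injOn_cos (angle_mem k hk.1 hk.2) (angle_mem m hm.1 hm.2) h
  have hn : (0 : ℝ) < n := Nat.cast_pos.2 (by omega)
  field_simp at hangle
  exact_mod_cast (by linarith : (k : ℝ) = m)

theorem lagBasis_eq_eval_basis (n k : ℕ) (t : ℝ) :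
    lagBasis n k t = (Lagrange.basis (Icc 1 n) (chebNode n) k).eval t := by
  simp [lagBasis, Lagrange.basis, Lagrange.basisDivisor, Polynomial.eval_prod, div_eq_inv_mul]

theorem sum_lagBasis {n : ℕ} (hn : 1 ≤ n) (t : ℝ) : ∑ k ∈ Icc 1 n, lagBasis n k t = 1 := by
  simp only [lagBasis_eq_eval_basis, ← Polynomial.eval_finsetSum,
    Lagrange.sum_basis (chebNode_injOn n) ⟨1, mem_Icc.2 ⟨le_rfl, hn⟩⟩, Polynomial.eval_one]

theorem sum_abs_lagBasis_le_lebesgueConst (n : ℕ) {x : ℝ} (hx : x ∈ Set.Icc (-1 : ℝ) 1) :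
    ∑ k ∈ Icc 1 n, |lagBasis n k x| ≤ lebesgueConst n := by
  have hcont : Continuous fun t => ∑ k ∈ Icc 1 n, |lagBasis n k t| := by
    unfold lagBasis; fun_prop
  obtain ⟨C, hC⟩ := isCompact_Icc.exists_bound_of_continuousOn hcont.continuousOn
  refine le_csSup ⟨C, ?_⟩ ⟨x, hx, rfl⟩
  rintro _ ⟨t, ht, rfl⟩
  exact (le_abs_self _).trans (hC t ht)

theorem chebNode_mem_Icc (n k : ℕ) : chebNode n k ∈ Set.Icc (-1 : ℝ) 1 :=
  ⟨Real.neg_one_le_cos _, Real.cos_le_one _⟩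

/-- Chebyshev-Grüss-type inequality for Lagrange interpolation at Chebyshev nodes, in terms
of the Lebesgue constant `Λ` and the total oscillations `ω(f;2)`, `ω(g;2)` on `[-1,1]`. -/
theorem lagrange_chebyshev_gruss (n : ℕ) (hn : 1 ≤ n)
    (f g : ℝ → ℝ)
    (hf : ContinuousOn f (Set.Icc (-1:ℝ) 1)) (hg : ContinuousOn g (Set.Icc (-1:ℝ) 1))
    (x : ℝ) (hx : x ∈ Set.Icc (-1:ℝ) 1) :
    |lagOp n (fun t => f t * g t) x - lagOp n f x * lagOp n g x| ≤
      (1 / 4) * lebesgueConst n * (1 + lebesgueConst n) *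
        sSup {d : ℝ | ∃ s ∈ Set.Icc (-1:ℝ) 1, ∃ t ∈ Set.Icc (-1:ℝ) 1, d = |f s - f t|} *
        sSup {d : ℝ | ∃ s ∈ Set.Icc (-1:ℝ) 1, ∃ t ∈ Set.Icc (-1:ℝ) 1, d = |g s - g t|} := by
  exact abs_sum_mul_mul_sub_sum_mul_sum_le (sum_lagBasis hn x)
    (sum_abs_lagBasis_le_lebesgueConst n hx)
    (fun i _ j _ => sub_le_sSup_oscillation isCompact_Icc hf (chebNode_mem_Icc n i)
      (chebNode_mem_Icc n j))
    (fun i _ j _ => sub_le_sSup_oscillation isCompact_Icc hg (chebNode_mem_Icc n i)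
      (chebNode_mem_Icc n j))
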